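/- Let D = (Π, C) be a domain description over a finite action alphabet Σ such that every fluent is inertial, i.e., for each fluent name f, Π contains the persistency laws □(◯f ← f, not ◯¬f) and □(◯¬f ← ¬f, not ◯f), and Π contains the initial-state completion laws f ← not ¬f and ¬f ← not f for every fluent f. Then for every infinite action sequence σ ∈ Σ^ω, every temporal answer set of Π over σ is a total temporal answer set over σ. -/

import Mathlib

/-! Core definitions: DLTL-style temporal answer set programming (Giordano–Martelli–Theseider Dupré). -/

/-- Simple fluent literals: a fluent name or its negation. -/
inductive SLit (F : Type*) where
  | pos : F → SLit F
  | neg : F → SLit F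

/-- `τ` is a finite prefix of the infinite word `σ`. -/
def PrefixOf {A : Type*} (σ : ℕ → A) (τ : List A) : Prop :=
  ∀ i : Fin τ.length, τ.get i = σ i.val

/-- The prefix of `σ` of length `n`. -/
def pfx {A : Type*} (σ : ℕ → A) (n : ℕ) : List A := (List.range n).map σ

/-- Action laws `□([a] l₀ ← body)`: in the body, `Sum.inl l` stands for the simple
literal `l` and `Sum.inr l` for the temporal literal `[a]l`; head `none` is `⊥`
(precondition laws). -/
structure ActionLaw (A F : Type*) where
  act : A
  head : Option (SLit F)
  pos : List (SLit F ⊕ SLit F)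
  neg : List (SLit F ⊕ SLit F)

/-- Dynamic causal laws `□(◯ l₀ ← body)`: `Sum.inl l` stands for `l`, `Sum.inr l` for `◯l`. -/
structure DynLaw (F : Type*) where
  head : SLit F
  pos : List (SLit F ⊕ SLit F)
  neg : List (SLit F ⊕ SLit F)

/-- Static causal laws `□(l₀ ← body)` (and initial state laws `l₀ ← body`);
head `none` is `⊥` (state constraints). -/
structure StatLaw (F : Type*) where
  head : Option (SLit F)
  pos : List (SLit F)
  neg : List (SLit F)

/-- The set Π of laws of a domain description: action laws, dynamic causal laws,
static causal laws (prefixed by `□`) and initial state laws. -/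
structure DomainLaws (A F : Type*) where
  action : Set (ActionLaw A F)
  dyn : Set (DynLaw F)
  stat : Set (StatLaw F)
  init : Set (StatLaw F)

/-- Temporal fluent literals: `l`, `[a]l`, `◯l`. -/
inductive TLit (A F : Type*) where
  | simple : SLit F → TLit A F
  | box : A → SLit F → TLit A F
  | next : SLit F → TLit A F

/-- A set of literals indexed by action sequences (the `S` of a pair `(σ,S)`):
`(τ, l) ∈ S` means `[τ]l ∈ S`. -/
abbrev TInterp (A F : Type*) := Set (List A × SLit F)

/-- `(σ, S)` is a partial temporal interpretation: all indexing sequences are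
prefixes of `σ` and `S` is consistent. -/
def IsPTI {A F : Type*} (σ : ℕ → A) (S : TInterp A F) : Prop :=
  (∀ p ∈ S, PrefixOf σ p.1) ∧ ∀ τ (f : F), ¬ ((τ, SLit.pos f) ∈ S ∧ (τ, SLit.neg f) ∈ S)

/-- `(σ, S)` is total: each fluent is decided at each prefix of `σ`. -/
def IsTotalTI {A F : Type*} (σ : ℕ → A) (S : TInterp A F) : Prop :=
  ∀ τ, PrefixOf σ τ → ∀ f : F, (τ, SLit.pos f) ∈ S ∨ (τ, SLit.neg f) ∈ S

/-- Satisfaction of a temporal fluent literal at prefix `τ` in `(σ, S)`. -/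
def satT {A F : Type*} (σ : ℕ → A) (S : TInterp A F) (τ : List A) : TLit A F → Prop
  | .simple l => (τ, l) ∈ S
  | .box a l => (τ ++ [a], l) ∈ S ∨ ¬ PrefixOf σ (τ ++ [a])
  | .next l => (τ ++ [σ τ.length], l) ∈ S

/-- Satisfaction of a rule head (`none` is `⊥`). -/
def satTHead {A F : Type*} (σ : ℕ → A) (S : TInterp A F) (τ : List A) :
    Option (TLit A F) → Prop
  | none => False
  | some t => satT σ S τ t

/-- Body literals of an action law for action `a`, as temporal literals. -/
def aBody {A F : Type*} (a : A) : SLit F ⊕ SLit F → TLit A F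
  | .inl l => TLit.simple l
  | .inr l => TLit.box a l

/-- Body literals of a dynamic causal law, as temporal literals. -/
def dBody {A F : Type*} : SLit F ⊕ SLit F → TLit A F
  | .inl l => TLit.simple l
  | .inr l => TLit.next l

/-- A localized rule `[a₁;…;a_h](H ← t₁,…,t_m)` (negation-free). -/
structure LRule (A F : Type*) where
  pre : List A
  head : Option (TLit A F)
  pos : List (TLit A F)

/-- The reduct `Π^{(σ,S)}`: for each prefix `τ` of `σ` and each law of `Π` whose
negated body literals are all unsatisfied in `(σ,S)` at `τ`, the localized rule
`[τ](H ← t₁,…,t_m)`; initial state laws are localized at the empty prefix. -/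
def Reduct {A F : Type*} (σ : ℕ → A) (S : TInterp A F) (D : DomainLaws A F) :
    Set (LRule A F) :=
  {r | (∃ al ∈ D.action, ∃ τ, PrefixOf σ τ ∧
          r = ⟨τ, al.head.map (TLit.box al.act), al.pos.map (aBody al.act)⟩ ∧
          ∀ t ∈ al.neg, ¬ satT σ S τ (aBody al.act t)) ∨
       (∃ dl ∈ D.dyn, ∃ τ, PrefixOf σ τ ∧
          r = ⟨τ, some (TLit.next dl.head), dl.pos.map dBody⟩ ∧
          ∀ t ∈ dl.neg, ¬ satT σ S τ (dBody t)) ∨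
       (∃ sl ∈ D.stat, ∃ τ, PrefixOf σ τ ∧
          r = ⟨τ, sl.head.map TLit.simple, sl.pos.map TLit.simple⟩ ∧
          ∀ l ∈ sl.neg, ¬ satT σ S τ (TLit.simple l)) ∨
       (∃ il ∈ D.init,
          r = ⟨[], il.head.map TLit.simple, il.pos.map TLit.simple⟩ ∧
          ∀ l ∈ il.neg, ¬ satT σ S [] (TLit.simple l))}

/-- `(σ,S)` satisfies the localized rule `r`. -/
def satLRule {A F : Type*} (σ : ℕ → A) (S : TInterp A F) (r : LRule A F) : Prop :=
  (∀ t ∈ r.pos, satT σ S r.pre t) → satTHead σ S r.pre r.head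

/-- `(σ, S)` is a temporal answer set of `Π`: it is a partial temporal interpretation
that satisfies the reduct `Π^{(σ,S)}` and is ⊆-minimal among those doing so. -/
def IsTempAS {A F : Type*} (σ : ℕ → A) (S : TInterp A F) (D : DomainLaws A F) : Prop :=
  IsPTI σ S ∧ (∀ r ∈ Reduct σ S D, satLRule σ S r) ∧
    ∀ S' ⊆ S, IsPTI σ S' → (∀ r ∈ Reduct σ S D, satLRule σ S' r) → S' = S

/-- A domain description is well-defined if every temporal answer set of Π is total. -/
def WellDefined {A F : Type*} (D : DomainLaws A F) : Prop :=
  ∀ (σ : ℕ → A) (S : TInterp A F), IsTempAS σ S D → IsTotalTI σ S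


/-! Totality needs only that `S` satisfies its reduct: the initial-state completion law
`f ← not ¬f` decides every fluent at `ε`, and if `f` is decided at a prefix `τ`, the
persistency law for the literal holding at `τ` decides `f` at `τ·σ(|τ|)` — either its
negated body `◯¬l` holds there, or the law fires and yields `◯l`. Induction on the
length of the prefix concludes. -/

section Prefixes

variable {A : Type*} (σ : ℕ → A)

theorem length_pfx (n : ℕ) : (pfx σ n).length = n := by
  simp [pfx]

theorem prefixOf_pfx (n : ℕ) : PrefixOf σ (pfx σ n) := fun i => by
  rw [List.get_eq_getElem]
  simp [pfx]

theorem pfx_succ (n : ℕ) : pfx σ (n + 1) = pfx σ n ++ [σ (pfx σ n).length] := by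
  simp [pfx, List.range_succ]

variable {σ}

theorem PrefixOf.eq_pfx_length {τ : List A} (h : PrefixOf σ τ) : τ = pfx σ τ.length :=
  List.ext_get (length_pfx σ _).symm fun i hi _ => by simpa [pfx] using h ⟨i, hi⟩

end Prefixes

section Reduct

variable {A F : Type*} {σ : ℕ → A} {S : TInterp A F} {D : DomainLaws A F}

theorem satT_next_of_mem_dyn (hS : ∀ r ∈ Reduct σ S D, satLRule σ S r) {dl : DynLaw F}
    (hdl : dl ∈ D.dyn) {τ : List A} (hτ : PrefixOf σ τ)
    (hpos : ∀ t ∈ dl.pos, satT σ S τ (dBody t)) (hneg : ∀ t ∈ dl.neg, ¬ satT σ S τ (dBody t)) :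
    satT σ S τ (TLit.next dl.head) :=
  hS _ (Or.inr <| Or.inl ⟨dl, hdl, τ, hτ, rfl, hneg⟩) (List.forall_mem_map.2 hpos)

theorem mem_of_mem_init (hS : ∀ r ∈ Reduct σ S D, satLRule σ S r) {l : SLit F}
    {pos neg : List (SLit F)} (hil : ⟨some l, pos, neg⟩ ∈ D.init)
    (hpos : ∀ l ∈ pos, ([], l) ∈ S) (hneg : ∀ l ∈ neg, ([], l) ∉ S) : ([], l) ∈ S :=
  hS _ (Or.inr <| Or.inr <| Or.inr ⟨_, hil, rfl, hneg⟩) (List.forall_mem_map.2 hpos)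

theorem decided_nil_of_mem_init (hS : ∀ r ∈ Reduct σ S D, satLRule σ S r) {f : F}
    (hcomp : (⟨some (SLit.pos f), [], [SLit.neg f]⟩ : StatLaw F) ∈ D.init) :
    ([], SLit.pos f) ∈ S ∨ ([], SLit.neg f) ∈ S :=
  or_iff_not_imp_right.2 fun hneg => mem_of_mem_init hS hcomp (by simp) (by simpa using hneg)

theorem decided_next_of_mem_dyn (hS : ∀ r ∈ Reduct σ S D, satLRule σ S r) {f : F}
    (hpers_pos :
      (⟨SLit.pos f, [Sum.inl (SLit.pos f)], [Sum.inr (SLit.neg f)]⟩ : DynLaw F) ∈ D.dyn)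
    (hpers_neg :
      (⟨SLit.neg f, [Sum.inl (SLit.neg f)], [Sum.inr (SLit.pos f)]⟩ : DynLaw F) ∈ D.dyn)
    {τ : List A} (hτ : PrefixOf σ τ) (h : (τ, SLit.pos f) ∈ S ∨ (τ, SLit.neg f) ∈ S) :
    (τ ++ [σ τ.length], SLit.pos f) ∈ S ∨ (τ ++ [σ τ.length], SLit.neg f) ∈ S := by
  by_contra hnot
  rw [not_or] at hnot
  rcases h with hpos | hneg
  · exact hnot.1 <| satT_next_of_mem_dyn hS hpers_pos hτ (by simpa [dBody, satT] using hpos)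
      (by simpa [dBody, satT] using hnot.2)
  · exact hnot.2 <| satT_next_of_mem_dyn hS hpers_neg hτ (by simpa [dBody, satT] using hneg)
      (by simpa [dBody, satT] using hnot.1)

end Reduct

theorem stmt0_general {A F : Type*}
    (D : DomainLaws A F)
    (hpers : ∀ f : F,
      (⟨SLit.pos f, [Sum.inl (SLit.pos f)], [Sum.inr (SLit.neg f)]⟩ : DynLaw F) ∈ D.dyn ∧
      (⟨SLit.neg f, [Sum.inl (SLit.neg f)], [Sum.inr (SLit.pos f)]⟩ : DynLaw F) ∈ D.dyn)
    (hcomp : ∀ f : F,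
      (⟨some (SLit.pos f), [], [SLit.neg f]⟩ : StatLaw F) ∈ D.init ∧
      (⟨some (SLit.neg f), [], [SLit.pos f]⟩ : StatLaw F) ∈ D.init) :
    ∀ (σ : ℕ → A) (S : TInterp A F), IsTempAS σ S D → IsTotalTI σ S := by
  rintro σ S ⟨-, hS, -⟩ τ hτ f
  rw [hτ.eq_pfx_length]
  induction τ.length with
  | zero => exact decided_nil_of_mem_init hS (hcomp f).1
  | succ n ih =>
    rw [pfx_succ]
    exact decided_next_of_mem_dyn hS (hpers f).1 (hpers f).2 (prefixOf_pfx σ n) ih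

/-- Proposition 1: if Π contains the persistency laws
`□(◯f ← f, not ◯¬f)` and `□(◯¬f ← ¬f, not ◯f)` for every fluent name `f`
(all fluents are inertial), and the initial-state completion laws
`f ← not ¬f` and `¬f ← not f` for every fluent `f`, then for every infinite
action sequence `σ`, every temporal answer set of Π over `σ` is total. -/
theorem stmt0 {A F : Type*} [Fintype A] [Nonempty A] [Fintype F]
    (D : DomainLaws A F)
    (hpers : ∀ f : F,
      (⟨SLit.pos f, [Sum.inl (SLit.pos f)], [Sum.inr (SLit.neg f)]⟩ : DynLaw F) ∈ D.dyn ∧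
      (⟨SLit.neg f, [Sum.inl (SLit.neg f)], [Sum.inr (SLit.pos f)]⟩ : DynLaw F) ∈ D.dyn)
    (hcomp : ∀ f : F,
      (⟨some (SLit.pos f), [], [SLit.neg f]⟩ : StatLaw F) ∈ D.init ∧
      (⟨some (SLit.neg f), [], [SLit.pos f]⟩ : StatLaw F) ∈ D.init) :
    ∀ (σ : ℕ → A) (S : TInterp A F), IsTempAS σ S D → IsTotalTI σ S :=
  stmt0_general D hpers hcomp
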